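/- Let F : ℝ^d → ℝ^d be continuously differentiable on a neighborhood of a point ω* with F(ω*) = ω*, let u ∈ ℝ^d be a unit vector, Π := I − u·uᵀ the orthogonal projection onto the orthogonal complement of u, let H : ℝ^d → ℝ^d be a symmetric linear map, γ > 0, and suppose the derivative of F at ω* equals Π∘(I − (1/γ)H). Let (ω_k) satisfy ω_{k+1} = F(ω_k) for all k, ω_k ≠ ω* for all k, and ω_k → ω*; set p_k := ω_k − ω*. If (I − (1/γ)H)(p_k/‖p_k‖) converges to some w ∈ span{u}, then ‖p_{k+1}‖/‖p_k‖ → 0 as k → ∞ (superlinear convergence). -/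

import Mathlib

/-!
With `p_k = ω_k - ω*` and `A = F'(ω*)`, differentiability at the fixed point gives
`p_{k+1} = A p_k + o(‖p_k‖)`, and `A p_k = ‖p_k‖ • A (p_k / ‖p_k‖)`. Here `A = Π ∘ (I - H/γ)`
and `(I - H/γ) (p_k / ‖p_k‖)` tends to a vector of `span {u}`, which `Π` annihilates, so
`A p_k = o(‖p_k‖)` and hence `p_{k+1} = o(‖p_k‖)`.
-/

open scoped RealInnerProductSpace
open Filter Topology Asymptotics

section

variable {E G : Type*} [NormedAddCommGroup E] [NormedSpace ℝ E]
  [NormedAddCommGroup G] [NormedSpace ℝ G]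

theorem ContinuousLinearMap.map_eq_norm_smul_map_inv_norm_smul (A : E →L[ℝ] G) (p : E) :
    A p = ‖p‖ • A (‖p‖⁻¹ • p) := by
  rcases eq_or_ne p 0 with rfl | hp
  · simp
  · rw [A.map_smul, smul_smul, mul_inv_cancel₀ (norm_ne_zero_iff.2 hp), one_smul]

theorem ContinuousLinearMap.isLittleO_of_tendsto_map_inv_norm_smul {α : Type*} {l : Filter α}
    (A : E →L[ℝ] G) {p : α → E} (h : Tendsto (fun k => A (‖p k‖⁻¹ • p k)) l (𝓝 0)) :
    (fun k => A (p k)) =o[l] p := by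
  have hsmul := (isBigO_refl (fun k => ‖p k‖) l).smul_isLittleO (isLittleO_one_iff ℝ |>.2 h)
  simp only [smul_eq_mul, mul_one, ← A.map_eq_norm_smul_map_inv_norm_smul] at hsmul
  exact hsmul.trans_isBigO (isBigO_norm_left.2 (isBigO_refl _ _))

theorem HasFDerivAt.tendsto_norm_sub_succ_div_of_fixedPoint {F : E → E} {A : E →L[ℝ] E} {x : E}
    (hF : HasFDerivAt F A x) (hfix : F x = x) {ω : ℕ → E} (hiter : ∀ k, ω (k + 1) = F (ω k))
    (hconv : Tendsto ω atTop (𝓝 x))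
    (hA : Tendsto (fun k => A (‖ω k - x‖⁻¹ • (ω k - x))) atTop (𝓝 0)) :
    Tendsto (fun k => ‖ω (k + 1) - x‖ / ‖ω k - x‖) atTop (𝓝 0) := by
  have hrem : (fun k => ω (k + 1) - x - A (ω k - x)) =o[atTop] (fun k => ω k - x) := by
    simpa only [Function.comp_def, hfix, hiter] using hF.isLittleO.comp_tendsto hconv
  have hsucc : (fun k => ω (k + 1) - x) =o[atTop] (fun k => ω k - x) := by
    simpa using hrem.add (A.isLittleO_of_tendsto_map_inv_norm_smul hA)
  -- Once the iteration reaches the fixed point it stays there, so the ratio is `0 / 0 = 0`.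
  refine (isLittleO_iff_tendsto fun k hk => ?_).1 hsucc.norm_norm
  rw [norm_eq_zero, sub_eq_zero] at hk ⊢
  rw [hiter, hk, hfix]

end

theorem sub_inner_smul_eq_zero_of_mem_span_singleton {E : Type*} [NormedAddCommGroup E]
    [InnerProductSpace ℝ E] {u w : E} (hu : ‖u‖ = 1) (hw : w ∈ Submodule.span ℝ {u}) :
    w - ⟪u, w⟫ • u = 0 := by
  obtain ⟨c, rfl⟩ := Submodule.mem_span_singleton.1 hw
  rw [real_inner_smul_right, real_inner_self_eq_norm_sq, hu]
  simp

theorem stmt_15 {d : ℕ} (γ : ℝ)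
    (F : EuclideanSpace ℝ (Fin d) → EuclideanSpace ℝ (Fin d))
    (ωs : EuclideanSpace ℝ (Fin d))
    (hF : ∃ U ∈ nhds ωs, ContDiffOn ℝ 1 F U) (hfix : F ωs = ωs)
    (u : EuclideanSpace ℝ (Fin d)) (hu : ‖u‖ = 1)
    (H : EuclideanSpace ℝ (Fin d) →L[ℝ] EuclideanSpace ℝ (Fin d))
    (hJ : ∀ p, fderiv ℝ F ωs p =
      (p - (1 / γ) • H p) - ⟪u, p - (1 / γ) • H p⟫ • u)
    (ω : ℕ → EuclideanSpace ℝ (Fin d))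
    (hiter : ∀ k, ω (k + 1) = F (ω k))
    (hconv : Filter.Tendsto ω Filter.atTop (nhds ωs))
    (w : EuclideanSpace ℝ (Fin d)) (hw : w ∈ Submodule.span ℝ {u})
    (hlim : Filter.Tendsto
      (fun k => ‖ω k - ωs‖⁻¹ • (ω k - ωs) - (1 / γ) • H (‖ω k - ωs‖⁻¹ • (ω k - ωs)))
      Filter.atTop (nhds w)) :
    Filter.Tendsto (fun k => ‖ω (k + 1) - ωs‖ / ‖ω k - ωs‖)
      Filter.atTop (nhds 0) := by
  obtain ⟨U, hU, hF⟩ := hF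
  have hderiv : HasFDerivAt F (fderiv ℝ F ωs) ωs :=
    ((hF.contDiffAt hU).differentiableAt one_ne_zero).hasFDerivAt
  refine hderiv.tendsto_norm_sub_succ_div_of_fixedPoint hfix hiter hconv ?_
  have hproj : Continuous fun v : EuclideanSpace ℝ (Fin d) => v - ⟪u, v⟫ • u := by fun_prop
  simpa only [hJ, Function.comp_def,
    sub_inner_smul_eq_zero_of_mem_span_singleton hu hw]
    using (hproj.tendsto w).comp hlim
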